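/- arXiv:1809.07312 — 4 statements merged into one kernel-verified Lean document; each statement's English description precedes it below -/
import Mathlib

section
/- Under the setup with A = diag(A_u, A_s), Q ≻ 0, P_{s,∞} solving the stable Lyapunov equation, and L = A + Q(A')^{-1} diag(0, P_{s,∞}^{-1}), the set of eigenvalues of L equals the union of the eigenvalues of A_u and the eigenvalues of A_s^{-1} (counted appropriately, e.g. the characteristic polynomial of L equals that of A_u times that of A_s^{-1}). -/
open Matrix

/-- `A` is Schur stable: all (complex) eigenvalues have modulus `< 1`. -/
def SchurStable {ns : ℕ} (A : Matrix (Fin ns) (Fin ns) ℝ) : Prop :=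
  ∀ μ ∈ spectrum ℂ (A.map (algebraMap ℝ ℂ)), ‖μ‖ < 1

section aux

open Polynomial

variable {n : Type*} [DecidableEq n] [Fintype n]

lemma charpoly_transpose' (M : Matrix n n ℝ) : Mᵀ.charpoly = M.charpoly := by
  rw [Matrix.charpoly, Matrix.charpoly, ← Matrix.det_transpose (charmatrix M)]
  congr 1
  ext i j
  by_cases h : i = j <;>
    simp [charmatrix, Matrix.transpose_apply, Matrix.scalar, Matrix.diagonal, h,
      Matrix.one_apply, eq_comm]

lemma charpoly_conj' (P M : Matrix n n ℝ) (hP : IsUnit P.det) :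
    (P * M * P⁻¹).charpoly = M.charpoly := by
  set P' : Matrix n n ℝ[X] := P.map C with hP'
  set Q' : Matrix n n ℝ[X] := P⁻¹.map C with hQ'
  have hPQ : P' * Q' = 1 := by
    rw [hP', hQ', ← Matrix.map_mul, Matrix.mul_nonsing_inv _ hP,
      Matrix.map_one _ (map_zero C) (map_one C)]
  have hscal : P' * Matrix.scalar n X * Q' = Matrix.scalar n X := by
    rw [(Matrix.scalar_commute X (fun r => Commute.all _ _) P').symm.eq,
      Matrix.mul_assoc, hPQ, Matrix.mul_one]
  have key : charmatrix (P * M * P⁻¹) = P' * charmatrix M * Q' := by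
    rw [charmatrix, charmatrix, Matrix.mul_sub, Matrix.sub_mul, hscal]
    congr 1
    simp only [RingHom.mapMatrix_apply, Matrix.map_mul, hP', hQ']
  rw [Matrix.charpoly, Matrix.charpoly, key, Matrix.det_mul, Matrix.det_mul]
  have : P'.det * Q'.det = 1 := by rw [← Matrix.det_mul, hPQ, Matrix.det_one]
  calc P'.det * (charmatrix M).det * Q'.det
      = P'.det * Q'.det * (charmatrix M).det := by ring
    _ = (charmatrix M).det := by rw [this, one_mul]

end aux

/-- The eigenvalues of the State-Secrecy Code weighting matrix `L` are those
of `Au` together with those of `As⁻¹`: the characteristic polynomial of `L`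
is the product of those of `Au` and `As⁻¹`. -/
theorem ssc_weighting_matrix_charpoly {nu ns : ℕ}
    (Au : Matrix (Fin nu) (Fin nu) ℝ)
    (As Qs PsInf : Matrix (Fin ns) (Fin ns) ℝ)
    (Qu : Matrix (Fin nu) (Fin nu) ℝ)
    (Q12 : Matrix (Fin nu) (Fin ns) ℝ)
    (hAu : IsUnit Au.det) (hAs : IsUnit As.det) (hAsStable : SchurStable As)
    (hQ : (fromBlocks Qu Q12 Q12ᵀ Qs).PosDef)
    (hQsymm : (fromBlocks Qu Q12 Q12ᵀ Qs).IsSymm)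
    (hPsInf : PsInf.PosDef) (hLyap : PsInf = As * PsInf * Asᵀ + Qs) :
    (fromBlocks Au 0 0 As +
       fromBlocks Qu Q12 Q12ᵀ Qs * ((fromBlocks Au 0 0 As)ᵀ)⁻¹ *
         fromBlocks 0 0 0 PsInf⁻¹).charpoly =
      Au.charpoly * (As⁻¹).charpoly := by
  have hAuT : IsUnit Auᵀ.det := by rwa [Matrix.det_transpose]
  have hAsT : IsUnit Asᵀ.det := by rwa [Matrix.det_transpose]
  have hPs : IsUnit PsInf.det := isUnit_iff_ne_zero.mpr (ne_of_gt hPsInf.det_pos)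
  -- inverse of block-diagonal transpose
  have hinv : ((fromBlocks Au 0 0 As)ᵀ)⁻¹ = fromBlocks (Auᵀ)⁻¹ 0 0 (Asᵀ)⁻¹ := by
    rw [fromBlocks_transpose, transpose_zero, transpose_zero]
    apply Matrix.inv_eq_right_inv
    rw [fromBlocks_multiply]
    simp [Matrix.mul_nonsing_inv _ hAuT, Matrix.mul_nonsing_inv _ hAsT,
      Matrix.fromBlocks_one]
  -- the correction term in block form
  have hQs : Qs = PsInf - As * PsInf * Asᵀ := by
    have h : Qs + As * PsInf * Asᵀ = PsInf := by conv_rhs => rw [hLyap]; rw [add_comm]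
    exact eq_sub_of_add_eq h
  have hlow : As + Qs * (Asᵀ)⁻¹ * PsInf⁻¹ = PsInf * (Asᵀ)⁻¹ * PsInf⁻¹ := by
    rw [hQs, Matrix.sub_mul, Matrix.sub_mul]
    have : As * PsInf * Asᵀ * (Asᵀ)⁻¹ * PsInf⁻¹ = As := by
      rw [Matrix.mul_assoc (As * PsInf), Matrix.mul_nonsing_inv _ hAsT,
        Matrix.mul_one, Matrix.mul_nonsing_inv_cancel_right _ _ hPs]
    rw [this]; abel
  have hmat : fromBlocks Au 0 0 As +
       fromBlocks Qu Q12 Q12ᵀ Qs * ((fromBlocks Au 0 0 As)ᵀ)⁻¹ *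
         fromBlocks 0 0 0 PsInf⁻¹ =
      fromBlocks Au (Q12 * (Asᵀ)⁻¹ * PsInf⁻¹) 0
        (PsInf * (Asᵀ)⁻¹ * PsInf⁻¹) := by
    rw [hinv, fromBlocks_multiply, fromBlocks_multiply, fromBlocks_add]
    rw [← hlow]
    congr 1 <;> simp [Matrix.mul_assoc]
  rw [hmat, Matrix.charpoly_fromBlocks_zero₂₁,
    charpoly_conj' PsInf ((Asᵀ)⁻¹) hPs, ← Matrix.transpose_nonsing_inv,
    charpoly_transpose']
end

section
/- The matrix Y_∞ = diag(0, P_{s,∞}^{-1}) satisfies the Lyapunov equation Y_∞ = (L')^{-1} Y_∞ L^{-1} + (L')^{-1} H' Q^{-1} H L^{-1}, where L = A + Q(A')^{-1}Y_∞ and H = A - L. -/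
open Matrix

/-- The steady-state open-loop information matrix `Y∞ = diag(0, P_{s,∞}⁻¹)`
satisfies the Lyapunov equation associated with the State-Secrecy Code. -/
theorem ssc_fixed_point_lyapunov {nu ns : ℕ}
    (Au : Matrix (Fin nu) (Fin nu) ℝ)
    (As Qs PsInf : Matrix (Fin ns) (Fin ns) ℝ)
    (Qu : Matrix (Fin nu) (Fin nu) ℝ)
    (Q12 : Matrix (Fin nu) (Fin ns) ℝ)
    (hAu : IsUnit Au.det) (hAs : IsUnit As.det) (hAsStable : SchurStable As)
    (hQ : (fromBlocks Qu Q12 Q12ᵀ Qs).PosDef)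
    (hQsymm : (fromBlocks Qu Q12 Q12ᵀ Qs).IsSymm)
    (hPsInf : PsInf.PosDef) (hLyap : PsInf = As * PsInf * Asᵀ + Qs)
    (A L H Yinf : Matrix (Fin nu ⊕ Fin ns) (Fin nu ⊕ Fin ns) ℝ)
    (hA : A = fromBlocks Au 0 0 As)
    (hYinf : Yinf = fromBlocks 0 0 0 PsInf⁻¹)
    (hL : L = A + fromBlocks Qu Q12 Q12ᵀ Qs * (Aᵀ)⁻¹ * Yinf)
    (hH : H = A - L) :
    Yinf = (Lᵀ)⁻¹ * Yinf * L⁻¹ +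
      (Lᵀ)⁻¹ * Hᵀ * (fromBlocks Qu Q12 Q12ᵀ Qs)⁻¹ * H * L⁻¹ := by
  set Qm : Matrix (Fin nu ⊕ Fin ns) (Fin nu ⊕ Fin ns) ℝ := fromBlocks Qu Q12 Q12ᵀ Qs with hQm
  have hPdet : IsUnit PsInf.det := hPsInf.det_pos.ne'.isUnit
  have hQdet : IsUnit Qm.det := hQ.det_pos.ne'.isUnit
  have hAsT : IsUnit (Asᵀ).det := by rwa [Matrix.det_transpose]
  have hAuT : IsUnit (Auᵀ).det := by rwa [Matrix.det_transpose]
  have hPsymm : PsInfᵀ = PsInf := hPsInf.isHermitian.eq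
  have hPisymm : (PsInf⁻¹)ᵀ = PsInf⁻¹ := by
    rw [Matrix.transpose_nonsing_inv, hPsymm]
  -- the inverse of Aᵀ
  have hAinvT : (Aᵀ)⁻¹ = fromBlocks (Auᵀ)⁻¹ 0 0 (Asᵀ)⁻¹ := by
    apply Matrix.inv_eq_right_inv
    rw [hA, fromBlocks_transpose, fromBlocks_multiply]
    simp [Matrix.mul_nonsing_inv _ hAuT, Matrix.mul_nonsing_inv _ hAsT, fromBlocks_one]
  set M : Matrix (Fin ns) (Fin ns) ℝ := (Asᵀ)⁻¹ * PsInf⁻¹ with hM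
  have hMT : Mᵀ = PsInf⁻¹ * As⁻¹ := by
    rw [hM, Matrix.transpose_mul, hPisymm, Matrix.transpose_nonsing_inv,
      Matrix.transpose_transpose]
  -- explicit block form of L
  have hLs : As + Qs * M = PsInf * M := by
    have h1 : PsInf * M = (As * PsInf * Asᵀ + Qs) * M := by rw [← hLyap]
    have h2 : As * PsInf * Asᵀ * M = As := by
      rw [hM, Matrix.mul_assoc (As * PsInf), Matrix.mul_nonsing_inv_cancel_left _ _ hAsT,
        Matrix.mul_nonsing_inv_cancel_right _ _ hPdet]
    rw [h1, add_mul, h2]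
  have hLb : L = fromBlocks Au (Q12 * M) 0 (PsInf * M) := by
    rw [hL, hAinvT, hA, hYinf, hQm, fromBlocks_multiply, fromBlocks_multiply, fromBlocks_add]
    simp only [Matrix.mul_zero, Matrix.zero_mul, add_zero, zero_add, Matrix.mul_assoc, ← hM]
    rw [hLs]
  have hHb : H = -(Qm * ((Aᵀ)⁻¹ * Yinf)) := by
    rw [hH, hL, Matrix.mul_assoc]
    abel
  have hK : (Aᵀ)⁻¹ * Yinf = fromBlocks 0 0 0 M := by
    rw [hAinvT, hYinf, fromBlocks_multiply]
    simp [hM]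
  -- H^T Q⁻¹ H
  have hQT : Qmᵀ = Qm := hQsymm
  have hHQH : Hᵀ * Qm⁻¹ * H = fromBlocks 0 0 0 (Mᵀ * Qs * M) := by
    have hHb2 : H = -(Qm * fromBlocks 0 0 0 M) := by rw [hHb, hK]
    rw [hHb2]
    simp only [Matrix.transpose_neg, Matrix.neg_mul, Matrix.mul_neg, neg_neg,
      Matrix.transpose_mul, hQT]
    rw [Matrix.mul_assoc ((fromBlocks 0 0 0 M)ᵀ * Qm), Matrix.nonsing_inv_mul_cancel_left _ _ hQdet,
      hQm, fromBlocks_transpose, fromBlocks_multiply, fromBlocks_multiply]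
    simp [Matrix.mul_assoc]
  -- L^T Y L
  have hLYL : Lᵀ * Yinf * L = fromBlocks 0 0 0 (Mᵀ * PsInf * M) := by
    rw [hLb, hYinf, fromBlocks_transpose, fromBlocks_multiply, fromBlocks_multiply]
    have h3 : (PsInf * M)ᵀ * PsInf⁻¹ * (PsInf * M) = Mᵀ * PsInf * M := by
      rw [Matrix.transpose_mul, hPsymm, Matrix.mul_assoc (Mᵀ * PsInf),
        Matrix.nonsing_inv_mul_cancel_left _ _ hPdet, ← Matrix.mul_assoc]
    simp only [Matrix.mul_zero, Matrix.zero_mul, add_zero, zero_add, Matrix.transpose_zero, h3]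
  -- the key scalar-block identity
  have hblock : Mᵀ * PsInf * M = PsInf⁻¹ + Mᵀ * Qs * M := by
    have hAsP : As * PsInf * Asᵀ = PsInf - Qs := eq_sub_of_add_eq hLyap.symm
    have h4 : Mᵀ * (As * PsInf * Asᵀ) * M = PsInf⁻¹ := by
      rw [hMT, hM]
      simp only [Matrix.mul_assoc]
      rw [Matrix.mul_nonsing_inv_cancel_left _ _ hAsT, Matrix.mul_nonsing_inv _ hPdet,
        Matrix.mul_one, Matrix.nonsing_inv_mul _ hAs, Matrix.mul_one]
    rw [hAsP, Matrix.mul_sub, Matrix.sub_mul] at h4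
    linear_combination (norm := module) h4
  -- the key matrix identity
  have key : Lᵀ * Yinf * L = Yinf + Hᵀ * Qm⁻¹ * H := by
    rw [hLYL, hHQH, hYinf, hblock, fromBlocks_add]
    simp
  -- invertibility of L
  have hLdet : IsUnit L.det := by
    rw [hLb, det_fromBlocks_zero₂₁, Matrix.det_mul, hM, Matrix.det_mul]
    exact hAu.mul (hPdet.mul ((Asᵀ.isUnit_nonsing_inv_det hAsT).mul
      (PsInf.isUnit_nonsing_inv_det hPdet)))
  have hLTdet : IsUnit (Lᵀ).det := by rwa [Matrix.det_transpose]
  -- finish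
  have hRHS : (Lᵀ)⁻¹ * Yinf * L⁻¹ + (Lᵀ)⁻¹ * Hᵀ * Qm⁻¹ * H * L⁻¹
      = (Lᵀ)⁻¹ * (Lᵀ * Yinf * L) * L⁻¹ := by
    rw [key]
    noncomm_ring
  rw [hRHS, Matrix.mul_assoc Lᵀ, ← Matrix.mul_assoc (Lᵀ)⁻¹, Matrix.nonsing_inv_mul _ hLTdet,
    Matrix.one_mul, Matrix.mul_assoc, Matrix.mul_nonsing_inv _ hLdet, Matrix.mul_one]
end

section
/- The Riccati map g(X) = L X L' - L X H' (H X H' + Q)^{-1} H X L' is monotone on positive semidefinite matrices: if 0 ⪯ X1 ⪯ X2 and Q ≻ 0, then g(X1) ⪯ g(X2). -/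
open Matrix

lemma riccati_key {R : Type*} [Ring R]
    (l lt h t x1 x2 n1 n2 s1 s2 : R)
    (e12 : s1 = s2 - h*(x2-x1)*t)
    (h1 : n1*s1 = 1) (h1' : s1*n1 = 1) (h2 : n2*s2 = 1) (h2' : s2*n2 = 1) :
    (l*x2*lt - l*x2*t*n2*h*x2*lt) - (l*x1*lt - l*x1*t*n1*h*x1*lt)
    = (l - l*x2*t*n2*h) * (x2 - x1) * (lt - t*n2*h*x2*lt)
      + (l*x2*t*n2 - l*x1*t*n1) * s1 * (n2*h*x2*lt - n1*h*x1*lt) := by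
  have c1 : ∀ a : R, n1*(s1*a) = a := fun a => by rw [← mul_assoc, h1, one_mul]
  have c2 : ∀ a : R, s1*(n1*a) = a := fun a => by rw [← mul_assoc, h1', one_mul]
  have c3 : ∀ a : R, n2*(s2*a) = a := fun a => by rw [← mul_assoc, h2, one_mul]
  have c4 : ∀ a : R, s2*(n2*a) = a := fun a => by rw [← mul_assoc, h2', one_mul]
  simp only [mul_sub, sub_mul, mul_add, add_mul, mul_assoc, c1, c2, c3, c4]
  simp only [e12, mul_sub, sub_mul, mul_add, add_mul, mul_assoc, c1, c2, c3, c4]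
  noncomm_ring

/-- The Riccati map `g(X) = L X L' - L X H' (H X H' + Q)⁻¹ H X L'` is
monotone with respect to the Loewner order on positive semidefinite
matrices. -/
theorem riccati_map_monotone {n : ℕ}
    (L H Q : Matrix (Fin n) (Fin n) ℝ)
    (hQ : Q.PosDef) (hQsymm : Q.IsSymm)
    (X1 X2 : Matrix (Fin n) (Fin n) ℝ)
    (hX1 : X1.PosSemidef) (hX1symm : X1.IsSymm)
    (hX2 : X2.PosSemidef) (hX2symm : X2.IsSymm)
    (h12 : (X2 - X1).PosSemidef) :
    ((L * X2 * Lᵀ - L * X2 * Hᵀ * (H * X2 * Hᵀ + Q)⁻¹ * H * X2 * Lᵀ) -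
     (L * X1 * Lᵀ - L * X1 * Hᵀ * (H * X1 * Hᵀ + Q)⁻¹ * H * X1 * Lᵀ)).PosSemidef := by
  set S1 := H * X1 * Hᵀ + Q with hS1def
  set S2 := H * X2 * Hᵀ + Q with hS2def
  have hHT : Hᴴ = Hᵀ := conjTranspose_eq_transpose_of_trivial H
  have hHX1 : (H * X1 * Hᵀ).PosSemidef := hHT ▸ hX1.mul_mul_conjTranspose_same H
  have hHX2 : (H * X2 * Hᵀ).PosSemidef := hHT ▸ hX2.mul_mul_conjTranspose_same H
  have hS1 : S1.PosDef := Matrix.PosDef.posSemidef_add hHX1 hQ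
  have hS2 : S2.PosDef := Matrix.PosDef.posSemidef_add hHX2 hQ
  have hd1 : IsUnit S1.det := (Matrix.isUnit_iff_isUnit_det _).mp hS1.isUnit
  have hd2 : IsUnit S2.det := (Matrix.isUnit_iff_isUnit_det _).mp hS2.isUnit
  have hS1symm : S1ᵀ = S1 := by
    rw [hS1def]; simp [Matrix.transpose_add, Matrix.transpose_mul, hX1symm.eq, hQsymm.eq,
      Matrix.mul_assoc]
  have hS2symm : S2ᵀ = S2 := by
    rw [hS2def]; simp [Matrix.transpose_add, Matrix.transpose_mul, hX2symm.eq, hQsymm.eq,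
      Matrix.mul_assoc]
  have hN1symm : (S1⁻¹)ᵀ = S1⁻¹ := by rw [Matrix.transpose_nonsing_inv, hS1symm]
  have hN2symm : (S2⁻¹)ᵀ = S2⁻¹ := by rw [Matrix.transpose_nonsing_inv, hS2symm]
  have e12 : S1 = S2 - H * (X2 - X1) * Hᵀ := by
    rw [hS1def, hS2def]; simp [Matrix.mul_sub, Matrix.sub_mul]; abel
  have key := riccati_key L Lᵀ H Hᵀ X1 X2 (S1⁻¹) (S2⁻¹) S1 S2 e12
    (Matrix.nonsing_inv_mul _ hd1) (Matrix.mul_nonsing_inv _ hd1)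
    (Matrix.nonsing_inv_mul _ hd2) (Matrix.mul_nonsing_inv _ hd2)
  rw [key]
  have hA : (L - L * X2 * Hᵀ * S2⁻¹ * H)ᴴ = Lᵀ - Hᵀ * S2⁻¹ * H * X2 * Lᵀ := by
    rw [conjTranspose_eq_transpose_of_trivial]
    simp [Matrix.transpose_sub, Matrix.transpose_mul, hX2symm.eq, hN2symm, Matrix.mul_assoc]
  have hB : (L * X2 * Hᵀ * S2⁻¹ - L * X1 * Hᵀ * S1⁻¹)ᴴ
      = S2⁻¹ * H * X2 * Lᵀ - S1⁻¹ * H * X1 * Lᵀ := by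
    rw [conjTranspose_eq_transpose_of_trivial]
    simp [Matrix.transpose_sub, Matrix.transpose_mul, hX1symm.eq, hX2symm.eq, hN1symm, hN2symm,
      Matrix.mul_assoc]
  have t1 := h12.mul_mul_conjTranspose_same (L - L * X2 * Hᵀ * S2⁻¹ * H)
  rw [hA] at t1
  have t2 := hS1.posSemidef.mul_mul_conjTranspose_same (L * X2 * Hᵀ * S2⁻¹ - L * X1 * Hᵀ * S1⁻¹)
  rw [hB] at t2
  exact t1.add t2
end

section
/- Y_∞ = diag(0, P_{s,∞}^{-1}) is a fixed point of the information Riccati map Y ↦ F Y F' - F Y F' (F Y F' + W)^{-1} F Y F', where F = (A')^{-1} and W = Q^{-1}. -/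
open Matrix

/-- `Y∞ = diag(0, P_{s,∞}⁻¹)` is a fixed point of the information Riccati
map `Y ↦ F Y F' - F Y F' (F Y F' + W)⁻¹ F Y F'`, `F = (A')⁻¹`, `W = Q⁻¹`. -/
theorem ssc_information_riccati_fixed_point {nu ns : ℕ}
    (Au : Matrix (Fin nu) (Fin nu) ℝ)
    (As Qs PsInf : Matrix (Fin ns) (Fin ns) ℝ)
    (Qu : Matrix (Fin nu) (Fin nu) ℝ)
    (Q12 : Matrix (Fin nu) (Fin ns) ℝ)
    (hAu : IsUnit Au.det) (hAs : IsUnit As.det) (hAsStable : SchurStable As)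
    (hQ : (fromBlocks Qu Q12 Q12ᵀ Qs).PosDef)
    (hQsymm : (fromBlocks Qu Q12 Q12ᵀ Qs).IsSymm)
    (hPsInf : PsInf.PosDef) (hLyap : PsInf = As * PsInf * Asᵀ + Qs)
    (F W Yinf : Matrix (Fin nu ⊕ Fin ns) (Fin nu ⊕ Fin ns) ℝ)
    (hF : F = ((fromBlocks Au 0 0 As)ᵀ)⁻¹)
    (hW : W = (fromBlocks Qu Q12 Q12ᵀ Qs)⁻¹)
    (hYinf : Yinf = fromBlocks 0 0 0 PsInf⁻¹) :
    Yinf = F * Yinf * Fᵀ -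
      F * Yinf * Fᵀ * (F * Yinf * Fᵀ + W)⁻¹ * (F * Yinf * Fᵀ) := by
  set Q : Matrix (Fin nu ⊕ Fin ns) (Fin nu ⊕ Fin ns) ℝ := fromBlocks Qu Q12 Q12ᵀ Qs with hQdef
  set S : Matrix (Fin ns) (Fin ns) ℝ := As * PsInf * Asᵀ with hSdef
  have hQd : IsUnit Q.det := isUnit_iff_ne_zero.mpr (ne_of_gt hQ.det_pos)
  have hPd : IsUnit PsInf.det := isUnit_iff_ne_zero.mpr (ne_of_gt hPsInf.det_pos)
  have hSd : IsUnit S.det := by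
    rw [hSdef, det_mul, det_mul, det_transpose]
    exact (hAs.mul hPd).mul hAs
  have hAuT : IsUnit (Auᵀ).det := by rwa [det_transpose]
  have hAsT : IsUnit (Asᵀ).det := by rwa [det_transpose]
  -- explicit form of F
  have hFinv : F = fromBlocks (Auᵀ)⁻¹ 0 0 (Asᵀ)⁻¹ := by
    rw [hF, fromBlocks_transpose, transpose_zero]
    apply inv_eq_right_inv
    rw [fromBlocks_multiply]
    simp [Matrix.mul_nonsing_inv _ hAuT, Matrix.mul_nonsing_inv _ hAsT,
      fromBlocks_one]
  have hFT : Fᵀ = fromBlocks Au⁻¹ 0 0 As⁻¹ := by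
    rw [hFinv, fromBlocks_transpose, transpose_nonsing_inv,
      transpose_nonsing_inv, transpose_transpose, transpose_transpose, transpose_zero,
      transpose_zero]
  -- G := F Yinf Fᵀ = diag (0, S⁻¹)
  have hG : F * Yinf * Fᵀ = fromBlocks 0 0 0 S⁻¹ := by
    rw [hFT, hFinv, hYinf, fromBlocks_multiply, fromBlocks_multiply, hSdef,
      Matrix.mul_inv_rev, Matrix.mul_inv_rev]
    simp [Matrix.mul_assoc]
  -- G + W = Q⁻¹ * N with N block upper triangular
  set N : Matrix (Fin nu ⊕ Fin ns) (Fin nu ⊕ Fin ns) ℝ :=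
    fromBlocks 1 (Q12 * S⁻¹) 0 (PsInf * S⁻¹) with hNdef
  have hQmul : Q * (fromBlocks 0 0 0 S⁻¹ + W) = N := by
    rw [Matrix.mul_add, hW, Matrix.mul_nonsing_inv _ hQd, hQdef, fromBlocks_multiply,
      hNdef, ← fromBlocks_one, fromBlocks_add]
    congr 1 <;> try simp
    -- Qs * S⁻¹ + 1 = PsInf * S⁻¹
    have : PsInf * S⁻¹ = S * S⁻¹ + Qs * S⁻¹ := by
      rw [← Matrix.add_mul, ← hLyap]
    rw [this, Matrix.mul_nonsing_inv _ hSd]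
    simp [add_comm]
  have hGW : fromBlocks 0 0 0 S⁻¹ + W = Q⁻¹ * N := by
    rw [← hQmul, ← Matrix.mul_assoc, Matrix.nonsing_inv_mul _ hQd, Matrix.one_mul]
  -- inverse of N
  have hNinv : N⁻¹ = fromBlocks 1 (-(Q12 * PsInf⁻¹)) 0 (S * PsInf⁻¹) := by
    apply inv_eq_right_inv
    rw [hNdef, fromBlocks_multiply]
    have h1 : Q12 * S⁻¹ * (S * PsInf⁻¹) = Q12 * PsInf⁻¹ := by
      rw [← Matrix.mul_assoc, Matrix.mul_assoc Q12 S⁻¹ S,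
        Matrix.nonsing_inv_mul _ hSd, Matrix.mul_one]
    have h2 : PsInf * S⁻¹ * (S * PsInf⁻¹) = 1 := by
      rw [← Matrix.mul_assoc, Matrix.mul_assoc PsInf S⁻¹ S,
        Matrix.nonsing_inv_mul _ hSd, Matrix.mul_one, Matrix.mul_nonsing_inv _ hPd]
    rw [h2]
    simp [h1, fromBlocks_one]
  have hGWinv : (fromBlocks 0 0 0 S⁻¹ + W)⁻¹ = N⁻¹ * Q := by
    rw [hGW, Matrix.mul_inv_rev, Matrix.nonsing_inv_nonsing_inv _ hQd]
  -- G * N⁻¹ = Yinf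
  have hGNinv : (fromBlocks 0 0 0 S⁻¹ : Matrix _ _ ℝ) * N⁻¹ = Yinf := by
    rw [hNinv, fromBlocks_multiply, hYinf]
    have : S⁻¹ * (S * PsInf⁻¹) = PsInf⁻¹ := by
      rw [← Matrix.mul_assoc, Matrix.nonsing_inv_mul _ hSd, Matrix.one_mul]
    simp [this]
  -- final computation
  rw [hG, hGWinv, ← Matrix.mul_assoc (fromBlocks 0 0 0 S⁻¹) N⁻¹ Q, hGNinv]
  rw [hYinf, hQdef, fromBlocks_multiply, fromBlocks_multiply]
  have hPQ : PsInf - Qs = S := by rw [hLyap, add_sub_cancel_right]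
  have hkey : S⁻¹ - PsInf⁻¹ * Qs * S⁻¹ = PsInf⁻¹ :=
    calc S⁻¹ - PsInf⁻¹ * Qs * S⁻¹
        = PsInf⁻¹ * (PsInf * S⁻¹) - PsInf⁻¹ * (Qs * S⁻¹) := by
          rw [← Matrix.mul_assoc, ← Matrix.mul_assoc, Matrix.nonsing_inv_mul _ hPd,
            Matrix.one_mul]
      _ = PsInf⁻¹ * ((PsInf - Qs) * S⁻¹) := by rw [← Matrix.mul_sub, Matrix.sub_mul]
      _ = PsInf⁻¹ := by
          rw [hPQ, Matrix.mul_nonsing_inv _ hSd, Matrix.mul_one]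
  rw [sub_eq_add_neg, fromBlocks_neg, fromBlocks_add]
  congr 1 <;> simp [← sub_eq_add_neg, hkey]
end
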